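/- arXiv:1207.0172 — 3 statements merged into one kernel-verified Lean document; each statement's English description precedes it below -/
import Mathlib

section
/- A prime p can be written as p = a² − 5b² with integers a, b if and only if p = 5 or p ≡ 1, 9, 11, or 19 (mod 20). -/
/-!
Necessity is a congruence computation: modulo 20 the form `a² - 5b²` only takes the values
0, 1, 4, 5, 9, 11, 15, 16, 19, and a prime in one of the classes 0, 4, 5, 15, 16 is 5.

Sufficiency: for `p ≡ ±1 (mod 5)` quadratic reciprocity makes 5 a square `t²` modulo `p`.
Thue's pigeonhole lemma gives `(X, Y) ≠ 0` with `X ≡ tY (mod p)`, `X² < 3p` and `5Y² < 3p`,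
so `X² - 5Y² = kp` with `|k| ≤ 2`. Here `k = 0` is impossible as 5 is not a square, `k = ±2`
is impossible modulo 4, and `k = -1` is turned into `k = 1` by the unit `2 + √5` of norm `-1`.
-/

theorem ZMod.val_sq_sub_five_mul_sq_mem (x y : ZMod 20) :
    (x ^ 2 - 5 * y ^ 2).val ∈ ({0, 1, 4, 5, 9, 11, 15, 16, 19} : Finset ℕ) := by
  revert x y
  decide

theorem mod_twenty_of_eq_sq_sub_five_mul_sq {p : ℕ} (hp : p.Prime) {a b : ℤ}
    (h : (p : ℤ) = a ^ 2 - 5 * b ^ 2) :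
    p = 5 ∨ p % 20 = 1 ∨ p % 20 = 9 ∨ p % 20 = 11 ∨ p % 20 = 19 := by
  have hmem : p % 20 ∈ ({0, 1, 4, 5, 9, 11, 15, 16, 19} : Finset ℕ) := by
    rw [← ZMod.val_natCast, ← Int.cast_natCast, h]
    push_cast
    exact ZMod.val_sq_sub_five_mul_sq_mem _ _
  have h2 : 2 ∣ p → p = 2 := fun h => ((Nat.prime_dvd_prime_iff_eq Nat.prime_two hp).mp h).symm
  have h5 : 5 ∣ p → p = 5 := fun h => ((Nat.prime_dvd_prime_iff_eq Nat.prime_five hp).mp h).symm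
  simp only [Finset.mem_insert, Finset.mem_singleton] at hmem
  omega

theorem isSquare_five_of_mod_five {p : ℕ} [Fact p.Prime] (hp : p % 5 = 1 ∨ p % 5 = 4) :
    IsSquare (5 : ZMod p) := by
  have := Fact.mk Nat.prime_five
  have hp2 : p ≠ 2 := by omega
  have hp5 : IsSquare (p : ZMod 5) := by
    rw [← ZMod.natCast_mod]
    rcases hp with h | h <;> rw [h]
    exacts [⟨1, rfl⟩, ⟨2, rfl⟩]
  simpa using (ZMod.exists_sq_eq_prime_iff_of_mod_four_eq_one (p := 5) rfl hp2).mp hp5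

theorem Int.abs_natCast_sub_natCast_le {m n k : ℕ} (hm : m < k + 1) (hn : n < k + 1) :
    |(m : ℤ) - n| ≤ k := by
  rw [abs_le]
  omega

/-- Thue's lemma. -/
theorem ZMod.exists_intCast_eq_mul_of_lt_mul {n : ℕ} [NeZero n] (t : ZMod n) (α β : ℕ)
    (h : n < (α + 1) * (β + 1)) :
    ∃ X Y : ℤ, (X ≠ 0 ∨ Y ≠ 0) ∧ |X| ≤ α ∧ |Y| ≤ β ∧ (X : ZMod n) = t * Y := by
  have hcard : Fintype.card (ZMod n) < Fintype.card (Fin (α + 1) × Fin (β + 1)) := by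
    simpa using h
  obtain ⟨u, v, huv, hf⟩ := Fintype.exists_ne_map_eq_of_card_lt
    (fun q : Fin (α + 1) × Fin (β + 1) => ((q.1 : ℕ) : ZMod n) - t * ((q.2 : ℕ) : ZMod n)) hcard
  refine ⟨(u.1 : ℕ) - (v.1 : ℕ), (u.2 : ℕ) - (v.2 : ℕ), ?_,
    Int.abs_natCast_sub_natCast_le u.1.2 v.1.2, Int.abs_natCast_sub_natCast_le u.2.2 v.2.2, ?_⟩
  · by_contra! h0
    exact huv (Prod.ext (Fin.ext (by omega)) (Fin.ext (by omega)))
  · push_cast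
    linear_combination hf

theorem exists_sq_sub_five_mul_sq_dvd {n : ℕ} [NeZero n] {t : ZMod n} (ht : t ^ 2 = 5) :
    ∃ X Y : ℤ, (X ≠ 0 ∨ Y ≠ 0) ∧ X ^ 2 < 3 * n ∧ 5 * Y ^ 2 < 3 * n ∧
      (n : ℤ) ∣ X ^ 2 - 5 * Y ^ 2 := by
  have hn : 0 < n := Nat.pos_of_neZero n
  obtain ⟨α, hα2, hα⟩ : ∃ α : ℕ, α ^ 2 ≤ 3 * n - 1 ∧ 3 * n ≤ (α + 1) ^ 2 :=
    ⟨_, Nat.sqrt_le' _, by have := Nat.lt_succ_sqrt' (3 * n - 1); grind⟩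
  obtain ⟨β, hβ2, hβ⟩ : ∃ β : ℕ, 5 * β ^ 2 ≤ 3 * n - 1 ∧ 3 * n ≤ 5 * (β + 1) ^ 2 :=
    ⟨Nat.sqrt ((3 * n - 1) / 5), by have := Nat.sqrt_le' ((3 * n - 1) / 5); omega,
      by have := Nat.lt_succ_sqrt' ((3 * n - 1) / 5); grind⟩
  have hαβ : n < (α + 1) * (β + 1) := by nlinarith
  obtain ⟨X, Y, hXY, hX, hY, hmod⟩ := ZMod.exists_intCast_eq_mul_of_lt_mul t α β hαβ
  have hX2 : X ^ 2 ≤ α ^ 2 := by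
    simpa using sq_le_sq.mpr (hX.trans (le_abs_self (α : ℤ)))
  have hY2 : Y ^ 2 ≤ β ^ 2 := by
    simpa using sq_le_sq.mpr (hY.trans (le_abs_self (β : ℤ)))
  refine ⟨X, Y, hXY, ?_, ?_, ?_⟩
  · zify [show 1 ≤ 3 * n by omega] at hα2
    linarith
  · zify [show 1 ≤ 3 * n by omega] at hβ2
    linarith
  · rw [← ZMod.intCast_zmod_eq_zero_iff_dvd]
    push_cast
    rw [hmod]
    linear_combination (Y : ZMod n) ^ 2 * ht

theorem sq_sub_five_mul_sq_ne_two_mul_odd (a b m : ℤ) (hm : Odd m) :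
    a ^ 2 - 5 * b ^ 2 ≠ 2 * m := by
  obtain ⟨k, rfl⟩ := hm
  intro h
  have h4 : (a : ZMod 4) ^ 2 - 5 * (b : ZMod 4) ^ 2 = 2 := by
    have h40 : (4 : ZMod 4) = 0 := rfl
    have := congrArg (fun z : ℤ => (z : ZMod 4)) h
    push_cast at this
    linear_combination this + (k : ZMod 4) * h40
  have key : ∀ x y : ZMod 4, x ^ 2 - 5 * y ^ 2 ≠ 2 := by decide
  exact key _ _ h4

instance : Zsqrtd.Nonsquare 5 :=
  ⟨fun n h => by
    have : n ≤ 2 := by nlinarith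
    interval_cases n <;> omega⟩

theorem exists_eq_sq_sub_five_mul_sq {p : ℕ} (hp : p.Prime) (hp2 : p ≠ 2)
    (h5 : IsSquare (5 : ZMod p)) : ∃ a b : ℤ, (p : ℤ) = a ^ 2 - 5 * b ^ 2 := by
  have : NeZero p := ⟨hp.ne_zero⟩
  obtain ⟨t, ht⟩ := h5
  obtain ⟨X, Y, hXY, hX, hY, k, hk⟩ := exists_sq_sub_five_mul_sq_dvd (t := t) (by rw [ht]; ring)
  have hpos : (0 : ℤ) < p := by exact_mod_cast hp.pos
  have hodd : Odd (p : ℤ) := by exact_mod_cast hp.odd_of_ne_two hp2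
  have hk_lo : -3 < k := by nlinarith [sq_nonneg X]
  have hk_hi : k < 3 := by nlinarith [sq_nonneg Y]
  interval_cases k
  · exact absurd (hk.trans (by ring)) (sq_sub_five_mul_sq_ne_two_mul_odd X Y _ hodd.neg)
  -- `(2 + √5)(X + Y√5) = (2X + 5Y) + (X + 2Y)√5`, and `2 + √5` has norm `-1`
  · exact ⟨2 * X + 5 * Y, X + 2 * Y, by linear_combination hk⟩
  · have := Zsqrtd.divides_sq_eq_zero_z (d := 5) (x := X) (y := Y) (by linear_combination hk)
    omega
  · exact ⟨X, Y, by linear_combination -hk⟩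
  · exact absurd (hk.trans (by ring)) (sq_sub_five_mul_sq_ne_two_mul_odd X Y _ hodd)

theorem stmt_8 (p : ℕ) (hp : p.Prime) :
    (∃ a b : ℤ, (p : ℤ) = a ^ 2 - 5 * b ^ 2) ↔
    (p = 5 ∨ p % 20 = 1 ∨ p % 20 = 9 ∨ p % 20 = 11 ∨ p % 20 = 19) := by
  have := Fact.mk hp
  constructor
  · rintro ⟨a, b, h⟩
    exact mod_twenty_of_eq_sq_sub_five_mul_sq hp h
  · rintro (rfl | h)
    · exact ⟨5, 2, by norm_num⟩
    · exact exists_eq_sq_sub_five_mul_sq hp (by omega) (isSquare_five_of_mod_five (by omega))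
end

section
/- Let A = {t ∈ ℤ : t = 3x² − y² for some integers x, y}, B = {t ∈ ℤ : t = x² + y² for some integers x, y}, and C = {t ∈ ℤ : t = 2(x² − xy + y²) for some integers x, y}. Then A ∩ B ⊆ C, B ∩ C ⊆ A, and C ∩ A ⊆ B, and all three inclusions are strict. -/
/-!
Write `⟨c⟩` for the set of values of `a² - c b²`, so that `B = ⟨-1⟩`, `A = -⟨3⟩` and
`C = 2⟨-3⟩` (the forms `x² - xy + y²` and `a² + 3b²` take the same values). Each `⟨c⟩` is
closed under multiplication, and Euler's descent divides a value by a prime value `q`.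
Dividing by the prime values `2 = 1 + 1` and `-2 = 1 - 3` reduces the three inclusions to:
a value of two of the forms `⟨-1⟩`, `⟨3⟩`, `⟨-3⟩` is a value of the third.

This is proved by induction on `|s|`, splitting off a prime `p ∣ s`. If `p² ∣ s`, then
`s / p²` is still a value of both forms. Otherwise both radicands are squares mod `p`,
congruences mod 8 and mod 9 exclude `p = 2, 3`, and since the product of two radicands is a
square times the third, all three are squares mod `p`. Thue's lemma then makes `p` a value of
all three forms, and Euler's descent splits it off.
-/

/-- Thue's lemma. -/
theorem Int.exists_sq_lt_dvd_sub_mul {p : ℕ} (hp : p.Prime) (t : ℤ) :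
    ∃ x y : ℤ, 0 < y ∧ x ^ 2 < p ∧ y ^ 2 < p ∧ (p : ℤ) ∣ x - t * y := by
  set n := p.sqrt
  have hn : 0 < n := Nat.sqrt_pos.mpr hp.pos
  have hpn : (p : ℤ) < (n + 1) ^ 2 := by exact_mod_cast p.lt_succ_sqrt'
  have hnp : (n : ℤ) ^ 2 ≤ p := by exact_mod_cast p.sqrt_le'
  obtain ⟨j, k, hk0, hkn, hjk⟩ := Real.exists_int_int_abs_mul_sub_le ((t : ℝ) / p) hn
  have hp0 : (0 : ℝ) < p := by exact_mod_cast hp.pos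
  have hx : |k * t - j * p| * (n + 1) ≤ (p : ℤ) := by
    have : |(k * t - j * p : ℝ)| * (n + 1) ≤ p := by
      rw [show (k * t - j * p : ℝ) = p * (k * (t / p) - j) by field_simp, abs_mul,
        abs_of_pos hp0]
      rw [le_div_iff₀ (by positivity)] at hjk
      nlinarith
    exact_mod_cast this
  refine ⟨k * t - j * p, k, hk0, ?_, ?_, ⟨-j, by ring⟩⟩
  · rw [← sq_abs]
    by_contra! hle
    have hsq := pow_le_pow_left₀ (by positivity) hx 2
    rw [mul_pow] at hsq
    nlinarith
  · have hkp : k ^ 2 ≤ p := by nlinarith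
    refine hkp.lt_of_ne fun h => ?_
    exact (Nat.prime_iff_prime_int.mp hp).not_isSquare ⟨k, by rw [← h, sq]⟩

theorem Int.sq_ne_three_mul_sq {x y : ℤ} (hy : y ≠ 0) : x ^ 2 ≠ 3 * y ^ 2 := by
  intro h
  apply Int.prime_three.not_isSquare
  rw [← Rat.isSquare_intCast_iff]
  exact ⟨x / y, by field_simp; exact_mod_cast h.symm⟩

theorem Int.eight_dvd_sq_sub_one {a : ℤ} (ha : Odd a) : 8 ∣ a ^ 2 - 1 := by
  obtain ⟨k, rfl⟩ := ha
  obtain ⟨K, hK⟩ := Int.even_mul_succ_self k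
  exact ⟨K, by linear_combination 4 * hK⟩

theorem Int.natAbs_lt_natAbs_mul {q m : ℤ} (hq : 1 < q.natAbs) (hqm : q * m ≠ 0) :
    m.natAbs < (q * m).natAbs := by
  rw [Int.natAbs_mul]
  exact lt_mul_left (Int.natAbs_pos.mpr (right_ne_zero_of_mul hqm)) hq

def normValues (c : ℤ) : Set ℤ := {t | ∃ a b : ℤ, t = a ^ 2 - c * b ^ 2}

namespace normValues

variable {c : ℤ}

theorem sq_mem (c k : ℤ) : k ^ 2 ∈ normValues c := ⟨k, 0, by ring⟩

theorem mul_mem {s t : ℤ} (hs : s ∈ normValues c) (ht : t ∈ normValues c) :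
    s * t ∈ normValues c := by
  obtain ⟨a, b, rfl⟩ := hs
  obtain ⟨d, e, rfl⟩ := ht
  exact ⟨a * d + c * b * e, a * e + b * d, by ring⟩

theorem nonneg (hc : c ≤ 0) {t : ℤ} (ht : t ∈ normValues c) : 0 ≤ t := by
  obtain ⟨a, b, rfl⟩ := ht
  nlinarith [sq_nonneg a, sq_nonneg b]

theorem of_prime_mul {q m : ℤ} (hq : Prime q) (hqc : q ∈ normValues c)
    (h : q * m ∈ normValues c) : m ∈ normValues c := by
  obtain ⟨d, e, hde⟩ := hqc
  obtain ⟨a, b, hab⟩ := h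
  -- `(a + b'√c)(d + e√c) = (ad + cb'e) + (ae + b'd)√c` has norm `q² m`; once `q` divides
  -- its `√c`-coordinate it divides the other one too, and the quotient has norm `m`.
  have of_dvd : ∀ b', q * m = a ^ 2 - c * b' ^ 2 → q ∣ a * e + b' * d → m ∈ normValues c := by
    rintro b' hab' ⟨v, hv⟩
    have hsq : (a * d + c * b' * e) ^ 2 = q ^ 2 * (m + c * v ^ 2) := by
      linear_combination -q * hab' - (a ^ 2 - c * b' ^ 2) * hde + c * (a * e + b' * d + q * v) * hv
    obtain ⟨u, hu⟩ := hq.dvd_of_dvd_pow ⟨q * (m + c * v ^ 2), by rw [hsq]; ring⟩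
    refine ⟨u, v, mul_left_cancel₀ (pow_ne_zero 2 hq.ne_zero) ?_⟩
    linear_combination -hsq + (a * d + c * b' * e + q * u) * hu
  have hconj : q ∣ (a * e - b * d) * (a * e + b * d) :=
    ⟨e ^ 2 * m - b ^ 2, by linear_combination -e ^ 2 * hab + b ^ 2 * hde⟩
  rcases hq.dvd_mul.mp hconj with h | h
  · exact of_dvd (-b) (by rw [hab]; ring) (by simpa [sub_eq_add_neg] using h)
  · exact of_dvd b hab h

theorem of_prime_sq_mul {q m : ℤ} (hq : Prime q) (hqc : q ∈ normValues c)
    (h : q ^ 2 * m ∈ normValues c) : m ∈ normValues c :=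
  of_prime_mul hq hqc (of_prime_mul hq hqc (by rwa [← mul_assoc, ← sq]))

theorem dvd_and_dvd_of_not_isSquare {p : ℕ} [Fact p.Prime] (hc : ¬IsSquare (c : ZMod p))
    {a b : ℤ} (h : (p : ℤ) ∣ a ^ 2 - c * b ^ 2) : (p : ℤ) ∣ a ∧ (p : ℤ) ∣ b := by
  simp only [← ZMod.intCast_zmod_eq_zero_iff_dvd] at h ⊢
  push_cast at h
  have hb : (b : ZMod p) = 0 := by
    by_contra hb
    exact hc ⟨a / b, by field_simp; linear_combination -h⟩
  refine ⟨?_, hb⟩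
  rw [hb] at h
  simpa using h

theorem exists_eq_sq_mul_of_not_isSquare {p : ℕ} [Fact p.Prime] (hc : ¬IsSquare (c : ZMod p))
    {s : ℤ} (hs : s ∈ normValues c) (hps : (p : ℤ) ∣ s) :
    ∃ m ∈ normValues c, s = p ^ 2 * m := by
  obtain ⟨a, b, rfl⟩ := hs
  obtain ⟨⟨a', rfl⟩, ⟨b', rfl⟩⟩ := dvd_and_dvd_of_not_isSquare hc hps
  exact ⟨a' ^ 2 - c * b' ^ 2, ⟨a', b', rfl⟩, by ring⟩

theorem isSquare_of_not_sq_dvd {p : ℕ} [Fact p.Prime] {s : ℤ} (hs : s ∈ normValues c)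
    (hps : (p : ℤ) ∣ s) (hps2 : ¬(p : ℤ) ^ 2 ∣ s) : IsSquare (c : ZMod p) := by
  by_contra hc
  obtain ⟨m, -, rfl⟩ := exists_eq_sq_mul_of_not_isSquare hc hs hps
  exact hps2 (dvd_mul_right _ _)

theorem four_dvd_sub_one_of_odd (hc : c % 4 = 3) {t : ℤ} (ht : t ∈ normValues c)
    (hodd : Odd t) : 4 ∣ t - 1 := by
  obtain ⟨a, b, rfl⟩ := ht
  obtain ⟨C, hC⟩ : ∃ C, c = 4 * C + 3 := ⟨c / 4, by omega⟩
  rcases Int.even_or_odd b with ⟨l, rfl⟩ | hb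
  · have ha : Odd a := by simpa [parity_simps] using hodd
    obtain ⟨A, hA⟩ : 4 ∣ a ^ 2 - 1 := by have := Int.sq_mod_four_eq_one_of_odd ha; omega
    exact ⟨A - c * l ^ 2, by linear_combination hA⟩
  · have hcodd : Odd c := by rw [Int.odd_iff]; omega
    have ha : Even a := by
      simpa [parity_simps, Int.not_even_iff_odd.mpr hcodd, Int.not_even_iff_odd.mpr hb] using hodd
    obtain ⟨k, rfl⟩ := ha
    obtain ⟨B, hB⟩ : 4 ∣ b ^ 2 - 1 := by have := Int.sq_mod_four_eq_one_of_odd hb; omega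
    exact ⟨k ^ 2 - c * B - C - 1, by linear_combination -c * hB - hC⟩

theorem eight_dvd_sub_of_emod_four_eq_two (hc : Odd c) {t : ℤ} (ht : t ∈ normValues c)
    (h : t % 4 = 2) : 8 ∣ t - (1 - c) := by
  obtain ⟨a, b, rfl⟩ := ht
  have hab : Even a ↔ Even b := by
    have heven : Even (a ^ 2 - c * b ^ 2) := by rw [Int.even_iff]; omega
    simpa [parity_simps, Int.not_even_iff_odd.mpr hc] using heven
  rcases Int.even_or_odd a with ha | ha
  · obtain ⟨k, rfl⟩ := ha
    obtain ⟨l, rfl⟩ := hab.mp ⟨k, rfl⟩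
    have : (k + k) ^ 2 - c * (l + l) ^ 2 = 4 * (k ^ 2 - c * l ^ 2) := by ring
    omega
  · have hb : Odd b := by simpa [parity_simps, Int.not_even_iff_odd.mpr ha] using hab
    obtain ⟨A, hA⟩ := Int.eight_dvd_sq_sub_one ha
    obtain ⟨B, hB⟩ := Int.eight_dvd_sq_sub_one hb
    exact ⟨A - c * B, by linear_combination hA - c * hB⟩

theorem nine_dvd_add_of_three_dvd (hc : 3 ∣ c) {t : ℤ} (ht : t ∈ normValues c) (h3 : 3 ∣ t)
    (h9 : ¬9 ∣ t) : 9 ∣ t + c := by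
  obtain ⟨a, b, rfl⟩ := ht
  obtain ⟨C, rfl⟩ := hc
  obtain ⟨a', rfl⟩ : 3 ∣ a := by
    refine Int.prime_three.dvd_of_dvd_pow (n := 2) ?_
    rw [show a ^ 2 = a ^ 2 - 3 * C * b ^ 2 + 3 * (C * b ^ 2) by ring]
    exact dvd_add h3 (dvd_mul_right _ _)
  have hb : ¬3 ∣ b := by
    rintro ⟨b', rfl⟩
    exact h9 ⟨a' ^ 2 - 3 * C * b' ^ 2, by ring⟩
  obtain ⟨B, hB⟩ := (Int.ModEq.pow_card_sub_one_eq_one Nat.prime_three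
    (Int.prime_three.coprime_iff_not_dvd.mpr hb).symm).dvd
  exact ⟨a' ^ 2 + C * B, by push_cast at hB; linear_combination 3 * C * hB⟩

theorem exists_dvd_of_isSquare {p : ℕ} (hp : p.Prime) (hc : IsSquare (c : ZMod p)) :
    ∃ x y : ℤ, 0 < y ∧ x ^ 2 < p ∧ y ^ 2 < p ∧ (p : ℤ) ∣ x ^ 2 - c * y ^ 2 := by
  obtain ⟨r, hr⟩ := hc
  obtain ⟨t, rfl⟩ := ZMod.intCast_surjective r
  have ht : (p : ℤ) ∣ t ^ 2 - c := by
    rw [← ZMod.intCast_zmod_eq_zero_iff_dvd]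
    push_cast
    rw [hr]
    ring
  obtain ⟨x, y, hy, hx, hyp, hxy⟩ := Int.exists_sq_lt_dvd_sub_mul hp t
  refine ⟨x, y, hy, hx, hyp, ?_⟩
  rw [show x ^ 2 - c * y ^ 2 = (x - t * y) * (x + t * y) + y ^ 2 * (t ^ 2 - c) by ring]
  exact dvd_add (dvd_mul_of_dvd_left hxy _) (dvd_mul_of_dvd_right ht _)

theorem natCast_mem_neg_one {p : ℕ} [Fact p.Prime] (h : IsSquare ((-1 : ℤ) : ZMod p)) :
    (p : ℤ) ∈ normValues (-1) := by
  obtain ⟨a, b, hab⟩ := Nat.Prime.sq_add_sq (ZMod.exists_sq_eq_neg_one_iff.mp (by simpa using h))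
  exact ⟨a, b, by rw [← hab]; push_cast; ring⟩

theorem natCast_mem_neg_three {p : ℕ} (hp : p.Prime) (hp2 : p ≠ 2)
    (h : IsSquare ((-3 : ℤ) : ZMod p)) : (p : ℤ) ∈ normValues (-3) := by
  obtain ⟨x, y, hy, hx, hyp, k, hk⟩ := exists_dvd_of_isSquare hp h
  have hk0 : 0 < k := by nlinarith
  have hk4 : k < 4 := by nlinarith
  -- `2p` is not a value modulo 8, and `3p` is divided by the prime value `3 = 0² + 3·1²`
  interval_cases k
  · exact ⟨x, y, by linarith⟩
  · have := eight_dvd_sub_of_emod_four_eq_two (by decide) ⟨x, y, hk.symm⟩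
    have := hp.eq_two_or_odd
    omega
  · exact of_prime_mul Int.prime_three ⟨0, 1, by norm_num⟩ ⟨x, y, by linarith⟩

theorem natCast_mem_or_neg_mem_three {p : ℕ} (hp : p.Prime) (h : IsSquare ((3 : ℤ) : ZMod p)) :
    (p : ℤ) ∈ normValues 3 ∨ -(p : ℤ) ∈ normValues 3 := by
  obtain ⟨x, y, hy, hx, hyp, k, hk⟩ := exists_dvd_of_isSquare hp h
  have hk0 : k ≠ 0 := by
    rintro rfl
    exact Int.sq_ne_three_mul_sq hy.ne' (by linarith)
  have hk3 : -3 < k := by nlinarith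
  have hk1 : k < 1 := by nlinarith
  -- `-2p` is divided by the prime value `-2 = 1² - 3·1²`
  interval_cases k
  · exact Or.inl (of_prime_mul Int.prime_two.neg ⟨1, 1, by norm_num⟩ ⟨x, y, by linarith⟩)
  · exact Or.inr ⟨x, y, by linarith⟩
  · exact (hk0 rfl).elim

theorem natCast_mem_three {p : ℕ} [Fact p.Prime] (hp2 : p ≠ 2)
    (h1 : IsSquare ((-1 : ℤ) : ZMod p)) (h3 : IsSquare ((3 : ℤ) : ZMod p)) :
    (p : ℤ) ∈ normValues 3 := by
  have hp4 : p % 4 ≠ 3 := ZMod.exists_sq_eq_neg_one_iff.mp (by simpa using h1)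
  have hodd := (Fact.out : p.Prime).eq_two_or_odd
  refine (natCast_mem_or_neg_mem_three Fact.out h3).resolve_right fun hneg => ?_
  have := four_dvd_sub_one_of_odd (by decide) hneg (by rw [Int.odd_iff]; omega)
  omega

theorem of_four_mul_neg_three {m : ℤ} (h : 4 * m ∈ normValues (-3)) : m ∈ normValues (-3) := by
  obtain ⟨a, b, hab⟩ := h
  have hab' : Even a ↔ Even b := by
    have : Even (a ^ 2 - -3 * b ^ 2) := hab ▸ ⟨2 * m, by ring⟩
    simpa [parity_simps, (by decide : ¬Even (3 : ℤ))] using this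
  suffices ∃ x y : ℤ, 4 * m = 4 * (x ^ 2 - -3 * y ^ 2) from
    let ⟨x, y, hxy⟩ := this; ⟨x, y, mul_left_cancel₀ four_ne_zero hxy⟩
  rcases Int.even_or_odd a with ⟨k, rfl⟩ | ha
  · obtain ⟨l, rfl⟩ := hab'.mp ⟨k, rfl⟩
    exact ⟨k, l, by rw [hab]; ring⟩
  have hb : Odd b := by simpa [parity_simps, Int.not_even_iff_odd.mpr ha] using hab'
  have h4 : 4 ∣ a - b ∨ 4 ∣ a + b := by
    obtain ⟨k, rfl⟩ := ha
    obtain ⟨l, rfl⟩ := hb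
    omega
  rcases h4 with ⟨z, hz⟩ | ⟨z, hz⟩
  · exact ⟨b + z, z, by rw [hab, show a = b + 4 * z by omega]; ring⟩
  · exact ⟨z - b, z, by rw [hab, show a = 4 * z - b by omega]; ring⟩

/-- `-1`, `3`, `-3` are the radicands of the three quadratic subfields of `ℚ(i, √3)`: the
product of any two of them is a square times the third. -/
abbrev radicands : Set ℤ := {-1, 3, -3}

theorem isSquare_of_isSquare_of_isSquare {F : Type*} [Field F] (h3 : (3 : F) ≠ 0)
    {c₁ c₂ : ℤ} (hc₁ : c₁ ∈ radicands) (hc₂ : c₂ ∈ radicands) (hne : c₁ ≠ c₂)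
    (h₁ : IsSquare (c₁ : F)) (h₂ : IsSquare (c₂ : F)) {c : ℤ} (hc : c ∈ radicands) :
    IsSquare (c : F) := by
  have key : c = c₁ ∨ c = c₂ ∨ c * (c₁ * c₂) = 3 ^ 2 := by
    rcases hc₁ with rfl | rfl | rfl <;> rcases hc₂ with rfl | rfl | rfl <;>
      rcases hc with rfl | rfl | rfl <;> omega
  rcases key with rfl | rfl | key
  · exact h₁
  · exact h₂
  have hcast : (c : F) * ((c₁ : F) * c₂) = 3 ^ 2 := by
    have := congrArg (Int.cast : ℤ → F) key
    push_cast at this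
    linear_combination this
  have h12 : (c₁ : F) * c₂ ≠ 0 := right_ne_zero_of_mul (hcast ▸ pow_ne_zero 2 h3)
  rw [eq_div_of_mul_eq h12 hcast]
  exact (IsSquare.sq 3).div (h₁.mul h₂)

theorem of_sq_mul (hc : c ∈ radicands) {p : ℕ} (hp : p.Prime) {m : ℤ}
    (h : (p : ℤ) ^ 2 * m ∈ normValues c) : m ∈ normValues c := by
  have := Fact.mk hp
  have hpZ : Prime (p : ℤ) := Nat.prime_iff_prime_int.mp hp
  by_cases hsq : IsSquare (c : ZMod p)
  swap
  · obtain ⟨m', hm', he⟩ :=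
      exists_eq_sq_mul_of_not_isSquare hsq h (dvd_mul_of_dvd_left (dvd_pow_self _ two_ne_zero) _)
    rwa [mul_left_cancel₀ (pow_ne_zero 2 hpZ.ne_zero) he]
  rcases hc with rfl | rfl | rfl
  · exact of_prime_sq_mul hpZ (natCast_mem_neg_one hsq) h
  · rcases natCast_mem_or_neg_mem_three hp hsq with hq | hq
    · exact of_prime_sq_mul hpZ hq h
    · exact of_prime_sq_mul hpZ.neg hq (by rwa [neg_sq])
  · rcases eq_or_ne p 2 with rfl | hp2
    · exact of_four_mul_neg_three (by simpa using h)
    · exact of_prime_sq_mul hpZ (natCast_mem_neg_three hp hp2 hsq) h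

theorem natCast_mem_of_isSquare {p : ℕ} [Fact p.Prime] (hp2 : p ≠ 2)
    (hsq : ∀ c ∈ radicands, IsSquare ((c : ℤ) : ZMod p)) :
    ∀ c ∈ radicands, (p : ℤ) ∈ normValues c
  | _, .inl rfl => natCast_mem_neg_one (hsq _ (by simp))
  | _, .inr (.inl rfl) => natCast_mem_three hp2 (hsq _ (by simp)) (hsq _ (by simp))
  | _, .inr (.inr rfl) => natCast_mem_neg_three Fact.out hp2 (hsq _ (by simp))

theorem four_dvd_of_two_dvd {c₁ c₂ : ℤ} (hc₁ : c₁ ∈ radicands) (hc₂ : c₂ ∈ radicands)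
    (hne : c₁ ≠ c₂) {s : ℤ} (h₁ : s ∈ normValues c₁) (h₂ : s ∈ normValues c₂)
    (h : 2 ∣ s) : 4 ∣ s := by
  by_contra h4
  have hs : s % 4 = 2 := by omega
  have odd_of_mem : ∀ c ∈ radicands, Odd c := by rintro c (rfl | rfl | rfl) <;> decide
  have e₁ := eight_dvd_sub_of_emod_four_eq_two (odd_of_mem _ hc₁) h₁ hs
  have e₂ := eight_dvd_sub_of_emod_four_eq_two (odd_of_mem _ hc₂) h₂ hs
  rcases hc₁ with rfl | rfl | rfl <;> rcases hc₂ with rfl | rfl | rfl <;> omega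

theorem nine_dvd_of_three_dvd {c₁ c₂ : ℤ} (hc₁ : c₁ ∈ radicands) (hc₂ : c₂ ∈ radicands)
    (hne : c₁ ≠ c₂) {s : ℤ} (h₁ : s ∈ normValues c₁) (h₂ : s ∈ normValues c₂)
    (h : 3 ∣ s) : 9 ∣ s := by
  by_contra h9
  have three_dvd : ∀ c ∈ radicands, s ∈ normValues c → 3 ∣ c := by
    rintro c (rfl | rfl | rfl) hs
    · have := isSquare_of_not_sq_dvd (p := 3) hs (by exact_mod_cast h) (by norm_num; exact h9)
      exact absurd this (by decide)
    all_goals norm_num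
  have e₁ := nine_dvd_add_of_three_dvd (three_dvd _ hc₁ h₁) h₁ h h9
  have e₂ := nine_dvd_add_of_three_dvd (three_dvd _ hc₂ h₂) h₂ h h9
  rcases hc₁ with rfl | rfl | rfl <;> rcases hc₂ with rfl | rfl | rfl <;> omega

theorem exists_eq_mul_of_mem_of_mem {c₁ c₂ : ℤ} (hc₁ : c₁ ∈ radicands)
    (hc₂ : c₂ ∈ radicands) (hne : c₁ ≠ c₂) {s : ℤ} (h₁ : s ∈ normValues c₁)
    (h₂ : s ∈ normValues c₂) (hs : 1 < s.natAbs) :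
    ∃ q m, s = q * m ∧ (∀ c ∈ radicands, q ∈ normValues c) ∧
      m ∈ normValues c₁ ∧ m ∈ normValues c₂ ∧ m.natAbs < s.natAbs := by
  obtain ⟨p, hp, hps⟩ : ∃ p : ℕ, p.Prime ∧ (p : ℤ) ∣ s :=
    ⟨_, Nat.minFac_prime (by omega), Int.natCast_dvd.mpr (Nat.minFac_dvd _)⟩
  have := Fact.mk hp
  have hpZ : Prime (p : ℤ) := Nat.prime_iff_prime_int.mp hp
  have hs0 : s ≠ 0 := by rintro rfl; simp at hs
  by_cases hp2 : (p : ℤ) ^ 2 ∣ s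
  · obtain ⟨m, rfl⟩ := hp2
    refine ⟨_, m, rfl, fun c _ => sq_mem c p, of_sq_mul hc₁ hp h₁, of_sq_mul hc₂ hp h₂,
      Int.natAbs_lt_natAbs_mul ?_ hs0⟩
    simpa [Int.natAbs_pow] using Nat.one_lt_pow two_ne_zero hp.one_lt
  have hsq₁ := isSquare_of_not_sq_dvd h₁ hps hp2
  have hsq₂ := isSquare_of_not_sq_dvd h₂ hps hp2
  have hp2' : p ≠ 2 := by
    rintro rfl
    exact hp2 (by exact_mod_cast four_dvd_of_two_dvd hc₁ hc₂ hne h₁ h₂ (by exact_mod_cast hps))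
  have h3 : ((3 : ℤ) : ZMod p) ≠ 0 := by
    rw [Ne, ZMod.intCast_zmod_eq_zero_iff_dvd]
    intro h
    obtain rfl := (Nat.prime_dvd_prime_iff_eq hp Nat.prime_three).mp (by exact_mod_cast h)
    exact hp2 (by exact_mod_cast nine_dvd_of_three_dvd hc₁ hc₂ hne h₁ h₂ (by exact_mod_cast hps))
  have hpS := natCast_mem_of_isSquare hp2' fun c hc =>
    isSquare_of_isSquare_of_isSquare (by simpa using h3) hc₁ hc₂ hne hsq₁ hsq₂ hc
  obtain ⟨m, rfl⟩ := hps
  exact ⟨p, m, rfl, hpS, of_prime_mul hpZ (hpS _ hc₁) h₁, of_prime_mul hpZ (hpS _ hc₂) h₂,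
    Int.natAbs_lt_natAbs_mul (by simpa using hp.one_lt) hs0⟩

theorem mem_of_mem_of_mem {c₁ c₂ : ℤ} (hc₁ : c₁ ∈ radicands) (hc₂ : c₂ ∈ radicands)
    (hne : c₁ ≠ c₂) {s : ℤ} (h₁ : s ∈ normValues c₁) (h₂ : s ∈ normValues c₂) {c : ℤ}
    (hc : c ∈ radicands) : s ∈ normValues c := by
  induction hn : s.natAbs using Nat.strong_induction_on generalizing s with
  | _ n ih =>
  rcases le_or_gt s.natAbs 1 with hs | hs
  · have hneg : c₁ ≤ 0 ∨ c₂ ≤ 0 := by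
      rcases hc₁ with rfl | rfl | rfl <;> rcases hc₂ with rfl | rfl | rfl <;> omega
    have hs0 : 0 ≤ s := hneg.elim (nonneg · h₁) (nonneg · h₂)
    obtain rfl | rfl : s = 0 ∨ s = 1 := by omega
    exacts [⟨0, 0, by ring⟩, ⟨1, 0, by ring⟩]
  obtain ⟨q, m, rfl, hq, hm₁, hm₂, hlt⟩ := exists_eq_mul_of_mem_of_mem hc₁ hc₂ hne h₁ h₂ hs
  exact mul_mem (hq c hc) (ih _ (hn ▸ hlt) hm₁ hm₂ rfl)

theorem mem_neg_one_iff {t : ℤ} : t ∈ normValues (-1) ↔ ∃ x y : ℤ, t = x ^ 2 + y ^ 2 := by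
  constructor <;> rintro ⟨x, y, rfl⟩ <;> exact ⟨x, y, by ring⟩

theorem neg_mem_three_iff {t : ℤ} : -t ∈ normValues 3 ↔ ∃ x y : ℤ, t = 3 * x ^ 2 - y ^ 2 := by
  constructor <;> rintro ⟨x, y, h⟩ <;> exact ⟨y, x, by linear_combination -h⟩

theorem mem_neg_three_iff {n : ℤ} :
    n ∈ normValues (-3) ↔ ∃ x y : ℤ, n = x ^ 2 - x * y + y ^ 2 := by
  constructor
  · rintro ⟨a, b, rfl⟩
    exact ⟨a + b, 2 * b, by ring⟩
  rintro ⟨x, y, rfl⟩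
  -- `x² - xy + y² = (x - y/2)² + 3(y/2)²`, and by symmetry one of `y`, `x`, `x - y` is even
  rcases Int.even_or_odd y with ⟨w, rfl⟩ | hy
  · exact ⟨x - w, w, by ring⟩
  rcases Int.even_or_odd x with ⟨w, rfl⟩ | hx
  · exact ⟨y - w, w, by ring⟩
  obtain ⟨w, hw⟩ := hx.sub_odd hy
  exact ⟨x - w, w, by rw [show y = x - 2 * w by omega]; ring⟩

theorem exists_eq_two_mul_iff {t : ℤ} :
    (∃ s ∈ normValues (-3), t = 2 * s) ↔ ∃ x y : ℤ, t = 2 * (x ^ 2 - x * y + y ^ 2) := by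
  constructor
  · rintro ⟨s, hs, rfl⟩
    obtain ⟨x, y, rfl⟩ := mem_neg_three_iff.mp hs
    exact ⟨x, y, rfl⟩
  · rintro ⟨x, y, rfl⟩
    exact ⟨_, mem_neg_three_iff.mpr ⟨x, y, rfl⟩, rfl⟩

theorem exists_eq_two_mul_of_neg_mem_three {t : ℤ} (hA : -t ∈ normValues 3)
    (hB : t ∈ normValues (-1)) : ∃ s ∈ normValues (-3), t = 2 * s := by
  have ht : Even t := by
    by_contra hodd
    rw [Int.not_even_iff_odd] at hodd
    have h₁ := four_dvd_sub_one_of_odd (by norm_num) hB hodd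
    have h₂ := four_dvd_sub_one_of_odd (by norm_num) hA hodd.neg
    omega
  obtain ⟨s, rfl⟩ := ht
  have hsB : s ∈ normValues (-1) :=
    of_prime_mul Int.prime_two ⟨1, 1, by norm_num⟩ (by rwa [two_mul])
  have hsA : s ∈ normValues 3 :=
    of_prime_mul Int.prime_two.neg ⟨1, 1, by norm_num⟩ (by convert hA using 1; ring)
  exact ⟨s, mem_of_mem_of_mem (by simp) (by simp) (by norm_num) hsB hsA (by simp), by ring⟩

theorem neg_mem_three_of_eq_two_mul {s t : ℤ} (hs : s ∈ normValues (-3)) (ht : t = 2 * s)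
    (hB : t ∈ normValues (-1)) : -t ∈ normValues 3 := by
  subst ht
  have hsB : s ∈ normValues (-1) := of_prime_mul Int.prime_two ⟨1, 1, by norm_num⟩ hB
  rw [← neg_mul]
  exact mul_mem ⟨1, 1, by norm_num⟩
    (mem_of_mem_of_mem (by simp) (by simp) (by norm_num) hs hsB (by simp))

theorem mem_neg_one_of_eq_two_mul {s t : ℤ} (hs : s ∈ normValues (-3)) (ht : t = 2 * s)
    (hA : -t ∈ normValues 3) : t ∈ normValues (-1) := by
  subst ht
  have hsA : s ∈ normValues 3 :=
    of_prime_mul Int.prime_two.neg ⟨1, 1, by norm_num⟩ (by convert hA using 1; ring)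
  exact mul_mem ⟨1, 1, by norm_num⟩
    (mem_of_mem_of_mem (by simp) (by simp) (by norm_num) hs hsA (by simp))

end normValues

theorem stmt_14 :
    let A : Set ℤ := {t | ∃ x y : ℤ, t = 3 * x ^ 2 - y ^ 2}
    let B : Set ℤ := {t | ∃ x y : ℤ, t = x ^ 2 + y ^ 2}
    let C : Set ℤ := {t | ∃ x y : ℤ, t = 2 * (x ^ 2 - x * y + y ^ 2)}
    A ∩ B ⊂ C ∧ B ∩ C ⊂ A ∧ C ∩ A ⊂ B := by
  intro A B C
  have hA (t : ℤ) : t ∈ A ↔ -t ∈ normValues 3 := normValues.neg_mem_three_iff.symm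
  have hB (t : ℤ) : t ∈ B ↔ t ∈ normValues (-1) := normValues.mem_neg_one_iff.symm
  have hC (t : ℤ) : t ∈ C ↔ ∃ s ∈ normValues (-3), t = 2 * s :=
    normValues.exists_eq_two_mul_iff.symm
  have hAB : A ∩ B ⊆ C := fun t ⟨htA, htB⟩ => (hC t).mpr
    (normValues.exists_eq_two_mul_of_neg_mem_three ((hA t).mp htA) ((hB t).mp htB))
  have hBC : B ∩ C ⊆ A := fun t ⟨htB, htC⟩ =>
    let ⟨_, hs, hts⟩ := (hC t).mp htC
    (hA t).mpr (normValues.neg_mem_three_of_eq_two_mul hs hts ((hB t).mp htB))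
  have hCA : C ∩ A ⊆ B := fun t ⟨htC, htA⟩ =>
    let ⟨_, hs, hts⟩ := (hC t).mp htC
    (hB t).mpr (normValues.mem_neg_one_of_eq_two_mul hs hts ((hA t).mp htA))
  refine ⟨(Set.ssubset_iff_of_subset hAB).mpr ⟨6, ⟨2, 1, by norm_num⟩, ?_⟩,
    (Set.ssubset_iff_of_subset hBC).mpr ⟨-1, ⟨0, 1, by norm_num⟩, ?_⟩,
    (Set.ssubset_iff_of_subset hCA).mpr ⟨1, ⟨1, 0, by norm_num⟩, ?_⟩⟩
  · rintro ⟨-, h⟩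
    have := normValues.eight_dvd_sub_of_emod_four_eq_two (by decide) ((hB 6).mp h) (by norm_num)
    omega
  · rintro ⟨h, -⟩
    have := normValues.nonneg (by norm_num) ((hB _).mp h)
    omega
  · rintro ⟨⟨x, y, h⟩, -⟩
    omega
end

section
/- For a prime p, the number 2p belongs to all three sets A = {3x² − y² : x,y ∈ ℤ}, B = {x² + y² : x,y ∈ ℤ}, and C = {2(x² − xy + y²) : x,y ∈ ℤ} if and only if p ≡ 1 (mod 12). -/
/-!
Necessity is a congruence check: a sum of two squares is never 6 mod 8, so 2p ∈ B rules out
p ≡ 3 (mod 4), and x² − xy + y² ≡ (x + y)² (mod 3), so 2p ∈ C rules out p ≡ 2 (mod 3).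

Sufficiency: for p ≡ 1 (mod 12) both 3 and −3 are squares mod p. Thue's lemma turns a square
root of d mod p into a nonzero (x, y) with x², y² < p and p ∣ x² − d y²; the size bound leaves
only a few multiples of p, and congruences mod 4 together with the irrationality of √3 single out
2p = 3y² − x² and p = a² + 3b², whence 2p = 2((a + b)² − (a + b)·2b + (2b)²). Membership in B is
Fermat's two-squares theorem and 2(a² + b²) = (a + b)² + (a − b)².
-/

lemma Int.sq_add_sq_emod_eight_ne_six (x y : ℤ) : (x ^ 2 + y ^ 2) % 8 ≠ 6 := by
  have key : ∀ a b : ZMod 8, a ^ 2 + b ^ 2 ≠ 6 := by decide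
  intro h
  have := ZMod.intCast_mod (x ^ 2 + y ^ 2) 8
  push_cast [h] at this
  exact key x y this.symm

lemma Int.sq_sub_mul_add_sq_emod_three_ne_two (x y : ℤ) : (x ^ 2 - x * y + y ^ 2) % 3 ≠ 2 := by
  have key : ∀ a b : ZMod 3, a ^ 2 - a * b + b ^ 2 ≠ 2 := by decide
  intro h
  have := ZMod.intCast_mod (x ^ 2 - x * y + y ^ 2) 3
  push_cast [h] at this
  exact key x y this.symm

lemma Int.three_mul_sq_sub_sq_emod_four_ne_one (x y : ℤ) : (3 * x ^ 2 - y ^ 2) % 4 ≠ 1 := by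
  have key : ∀ a b : ZMod 4, 3 * a ^ 2 - b ^ 2 ≠ 1 := by decide
  intro h
  have := ZMod.intCast_mod (3 * x ^ 2 - y ^ 2) 4
  push_cast [h] at this
  exact key x y this.symm

lemma Int.sq_add_three_mul_sq_emod_four_ne_two (x y : ℤ) : (x ^ 2 + 3 * y ^ 2) % 4 ≠ 2 := by
  have key : ∀ a b : ZMod 4, a ^ 2 + 3 * b ^ 2 ≠ 2 := by decide
  intro h
  have := ZMod.intCast_mod (x ^ 2 + 3 * y ^ 2) 4
  push_cast [h] at this
  exact key x y this.symm

lemma Int.eq_zero_of_sq_eq_mul_sq {d : ℤ} (hd : ¬IsSquare d) {x y : ℤ}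
    (h : x ^ 2 = d * y ^ 2) : y = 0 := by
  by_contra hy
  refine hd (Rat.isSquare_intCast_iff.mp ⟨x / y, ?_⟩)
  field_simp
  exact_mod_cast h.symm

theorem ZMod.thue_lemma (n : ℕ) [NeZero n] (a : ZMod n) :
    ∃ x y : ℤ, (x, y) ≠ 0 ∧ |x| ≤ n.sqrt ∧ |y| ≤ n.sqrt ∧ (x : ZMod n) = a * y := by
  set m := n.sqrt
  have hcard : Fintype.card (ZMod n) < Fintype.card (Fin (m + 1) × Fin (m + 1)) := by
    simpa [ZMod.card, ← sq] using Nat.lt_succ_sqrt' n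
  obtain ⟨⟨u, v⟩, ⟨u', v'⟩, hne, heq⟩ := Fintype.exists_ne_map_eq_of_card_lt
    (fun uv : Fin (m + 1) × Fin (m + 1) ↦ ((uv.1 : ℕ) : ZMod n) - a * ((uv.2 : ℕ) : ZMod n))
    hcard
  have hu := u.isLt; have hv := v.isLt; have hu' := u'.isLt; have hv' := v'.isLt
  refine ⟨(u : ℤ) - u', (v : ℤ) - v', ?_, ?_, ?_, ?_⟩
  · intro h
    simp only [Prod.mk_eq_zero, sub_eq_zero, Nat.cast_inj] at h
    exact hne (Prod.ext (Fin.ext h.1) (Fin.ext h.2))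
  · rw [abs_le]; constructor <;> omega
  · rw [abs_le]; constructor <;> omega
  · push_cast
    linear_combination heq

lemma Nat.Prime.exists_dvd_sq_sub_mul_sq {p : ℕ} (hp : p.Prime) {d : ℤ}
    (hd : IsSquare (d : ZMod p)) :
    ∃ x y : ℤ, (x, y) ≠ 0 ∧ x ^ 2 < p ∧ y ^ 2 < p ∧ (p : ℤ) ∣ x ^ 2 - d * y ^ 2 := by
  have : NeZero p := ⟨hp.ne_zero⟩
  obtain ⟨s, hs⟩ := hd
  obtain ⟨x, y, hxy, hx, hy, hcong⟩ := ZMod.thue_lemma p s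
  have hsqrt : (p.sqrt : ℤ) ^ 2 < p := by
    exact_mod_cast (Nat.sqrt_le' p).lt_of_ne
      fun h ↦ hp.not_isSquare ⟨p.sqrt, h.symm.trans (sq _)⟩
  refine ⟨x, y, hxy, ?_, ?_, ?_⟩
  · exact (sq_le_sq' (abs_le.mp hx).1 (abs_le.mp hx).2).trans_lt hsqrt
  · exact (sq_le_sq' (abs_le.mp hy).1 (abs_le.mp hy).2).trans_lt hsqrt
  · rw [← ZMod.intCast_zmod_eq_zero_iff_dvd]
    push_cast
    rw [hcong, hs]
    ring

lemma Nat.Prime.exists_eq_sq_add_three_mul_sq {p : ℕ} (hp : p.Prime) (hp2 : p ≠ 2)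
    (h : IsSquare (-3 : ZMod p)) : ∃ a b : ℤ, (p : ℤ) = a ^ 2 + 3 * b ^ 2 := by
  obtain ⟨x, y, hxy, hx, hy, k, hk⟩ :=
    hp.exists_dvd_sq_sub_mul_sq (d := -3) (by exact_mod_cast h)
  have hp_odd : p % 2 = 1 := hp.eq_two_or_odd.resolve_left hp2
  have hpos : 0 < k := by
    by_contra! hk0
    have hle : x ^ 2 + 3 * y ^ 2 ≤ 0 := by nlinarith
    exact hxy (Prod.mk_eq_zero.mpr ⟨by nlinarith, by nlinarith⟩)
  have hk_lt : k < 4 := by nlinarith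
  have hk_ne_two : k ≠ 2 := by
    rintro rfl
    have := Int.sq_add_three_mul_sq_emod_four_ne_two x y
    omega
  obtain rfl | rfl : k = 1 ∨ k = 3 := by omega
  · exact ⟨x, y, by linarith⟩
  · obtain ⟨z, rfl⟩ : (3 : ℤ) ∣ x :=
      Int.prime_three.dvd_of_dvd_pow (n := 2) ⟨p - y ^ 2, by linarith⟩
    exact ⟨y, z, by linarith⟩

lemma Nat.Prime.exists_two_mul_eq_three_mul_sq_sub_sq {p : ℕ} (hp : p.Prime) (hp4 : p % 4 = 1)
    (h : IsSquare (3 : ZMod p)) : ∃ x y : ℤ, 2 * (p : ℤ) = 3 * x ^ 2 - y ^ 2 := by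
  obtain ⟨x, y, hxy, hx, hy, k, hk⟩ :=
    hp.exists_dvd_sq_sub_mul_sq (d := 3) (by exact_mod_cast h)
  have hk_lt : k < 1 := by nlinarith [sq_nonneg y]
  have hk_gt : -3 < k := by nlinarith [sq_nonneg x]
  have hk0 : k ≠ 0 := by
    rintro rfl
    have h3 : ¬IsSquare (3 : ℤ) := by exact_mod_cast Nat.prime_three.not_isSquare
    have hy0 := Int.eq_zero_of_sq_eq_mul_sq h3 (x := x) (y := y) (by linarith)
    exact hxy (Prod.mk_eq_zero.mpr ⟨by simpa [hy0] using hk, hy0⟩)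
  have hk_ne_neg_one : k ≠ -1 := by
    rintro rfl
    have := Int.three_mul_sq_sub_sq_emod_four_ne_one y x
    omega
  obtain rfl : k = -2 := by omega
  exact ⟨y, x, by linarith⟩

lemma ZMod.isSquare_three_of_mod_twelve_eq_one {p : ℕ} [Fact p.Prime] (hp : p % 12 = 1) :
    IsSquare (3 : ZMod p) := by
  have : Fact (Nat.Prime 3) := ⟨Nat.prime_three⟩
  have h := (ZMod.exists_sq_eq_prime_iff_of_mod_four_eq_one (p := p) (q := 3) (by omega)
    (by norm_num)).mpr
  rw [← ZMod.natCast_mod p 3, show p % 3 = 1 by omega] at h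
  exact_mod_cast h (by simp)

theorem stmt_15 (p : ℕ) (hp : p.Prime) :
    ((∃ x y : ℤ, (2 * p : ℤ) = 3 * x ^ 2 - y ^ 2) ∧
     (∃ x y : ℤ, (2 * p : ℤ) = x ^ 2 + y ^ 2) ∧
     (∃ x y : ℤ, (2 * p : ℤ) = 2 * (x ^ 2 - x * y + y ^ 2))) ↔
    p % 12 = 1 := by
  have : Fact p.Prime := ⟨hp⟩
  constructor
  · rintro ⟨-, ⟨x, y, hB⟩, ⟨u, v, hC⟩⟩
    have hB_mod := Int.sq_add_sq_emod_eight_ne_six x y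
    have hC_mod := Int.sq_sub_mul_add_sq_emod_three_ne_two u v
    rw [← hB] at hB_mod
    rw [show u ^ 2 - u * v + v ^ 2 = p by linarith] at hC_mod
    have hdvd_two := hp.eq_one_or_self_of_dvd 2
    have hdvd_three := hp.eq_one_or_self_of_dvd 3
    omega
  · intro h12
    have h3 := ZMod.isSquare_three_of_mod_twelve_eq_one h12
    have hneg1 : IsSquare (-1 : ZMod p) := ZMod.exists_sq_eq_neg_one_iff.mpr (by omega)
    obtain ⟨a, b, hab⟩ := Nat.Prime.sq_add_sq (p := p) (by omega)
    obtain ⟨c, d, hcd⟩ :=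
      hp.exists_eq_sq_add_three_mul_sq (by omega) (by simpa using hneg1.mul h3)
    refine ⟨hp.exists_two_mul_eq_three_mul_sq_sub_sq (by omega) h3, ⟨a + b, a - b, ?_⟩,
      ⟨c + d, 2 * d, ?_⟩⟩
    · rw [← hab]; push_cast; ring
    · rw [hcd]; ring
end
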